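/- Let n, h, k be integers with k > h ≥ 0 and n ≡ h (mod 2). Then (n+1) times the total number of k-down steps, summed over all generalized Dyck paths from (0,0) to (n,h), equals Σ_{j=k−1−h}^{k−1} (2j+h+3)·C(n+1, (n−2j−h−2)/2), where a summand is 0 whenever (n−2j−h−2)/2 is negative. -/

import Mathlib

/-!
Appending a last step to a path gives the recursions `N(n+1,h) = N(n,h-1) + N(n,h+1)` for the
number of paths and `D(n+1,h) = D(n,h-1) + D(n,h+1) + [h+1 = k] N(n,k)` for the total number of
`k`-down steps, since the new step is a `k`-down step exactly when it descends from height `k`.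
With `m = (n-h)/2`, induction on `n` turns these into the ballot formula
`N(n,h) = C(n,m) - C(n,m-1)` and `D(n,h) = C(n, m - max(1, k-h)) - C(n, m-k-1)`.
Since `(n+1) (C(n,i) - C(n,i-1)) = (n+1-2i) C(n+1,i)`, the sum on the right-hand side
telescopes to `(n+1) D(n,h)` when `k > h`.
-/

open Finset

attribute [local instance] Classical.propDecidable

/-- The height of the lattice path `p` (where `true` is a northeast step `(1,1)` and
`false` is a southeast step `(1,-1)`) after its first `i` steps. -/
def pathHeight {n : ℕ} (p : Fin n → Bool) (i : ℕ) : ℤ :=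
  ∑ j ∈ Finset.univ.filter (fun j : Fin n => (j : ℕ) < i), (if p j then (1 : ℤ) else -1)

/-- `p` is a generalized Dyck path from `(0,0)` to `(n,h)`: it ends at height `h`
and never goes below the x-axis. -/
def IsGDPath {n : ℕ} (h : ℤ) (p : Fin n → Bool) : Prop :=
  pathHeight p n = h ∧ ∀ i ≤ n, 0 ≤ pathHeight p i

/-- The set of generalized Dyck paths from `(0,0)` to `(n,h)`. -/
noncomputable def gdPaths (n : ℕ) (h : ℤ) : Finset (Fin n → Bool) :=
  Finset.univ.filter (IsGDPath h)

/-- The number of `k`-down steps of `p`, i.e. southeast steps from height `k` to `k-1`. -/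
noncomputable def downSteps {n : ℕ} (k : ℤ) (p : Fin n → Bool) : ℕ :=
  (Finset.univ.filter (fun i : Fin n => p i = false ∧ pathHeight p (i : ℕ) = k)).card

/-- Binomial coefficient on integers, `0` unless `0 ≤ b ≤ a`. -/
def binom (a b : ℤ) : ℤ :=
  if 0 ≤ b ∧ b ≤ a then (a.toNat.choose b.toNat : ℤ) else 0

lemma binom_of_neg {a b : ℤ} (hb : b < 0) : binom a b = 0 := if_neg (by omega)

lemma binom_of_lt {a b : ℤ} (hab : a < b) : binom a b = 0 := if_neg (by omega)

lemma binom_natCast (n m : ℕ) : binom n m = n.choose m := by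
  unfold binom
  split_ifs with h
  · simp
  · rw [Nat.choose_eq_zero_of_lt (by omega), Nat.cast_zero]

lemma binom_natCast_zero (n : ℕ) : binom n 0 = 1 := by
  simpa using binom_natCast n 0

lemma binom_natCast_succ (n : ℕ) (b : ℤ) :
    binom ((n : ℤ) + 1) b = binom n b + binom n (b - 1) := by
  rcases lt_or_ge b 0 with hb | hb
  · rw [binom_of_neg hb, binom_of_neg hb, binom_of_neg (by omega), add_zero]
  lift b to ℕ using hb
  rw [← Nat.cast_succ]
  rcases b with _ | b
  · rw [Nat.cast_zero, zero_sub, binom_of_neg (b := -1) (by norm_num), add_zero,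
      binom_natCast_zero, binom_natCast_zero]
  · rw [show ((b + 1 : ℕ) : ℤ) - 1 = b by push_cast; ring, binom_natCast, binom_natCast,
      binom_natCast, Nat.choose_succ_succ', Nat.cast_add, add_comm]

lemma binom_natCast_symm (n : ℕ) (b : ℤ) : binom n (n - b) = binom n b := by
  rcases lt_or_ge b 0 with hb | hb
  · rw [binom_of_neg hb, binom_of_lt (by omega)]
  rcases lt_or_ge (n : ℤ) b with hnb | hbn
  · rw [binom_of_lt hnb, binom_of_neg (by omega)]
  lift b to ℕ using hb
  rw [show (n : ℤ) - b = ((n - b : ℕ) : ℤ) by omega, binom_natCast, binom_natCast,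
    Nat.choose_symm (by omega)]

lemma natCast_succ_mul_binom_sub (n : ℕ) (m : ℤ) :
    ((n : ℤ) + 1) * (binom n m - binom n (m - 1)) =
      ((n : ℤ) + 1 - 2 * m) * binom ((n : ℤ) + 1) m := by
  rcases lt_or_ge m 0 with hm | hm
  · rw [binom_of_neg hm, binom_of_neg hm, binom_of_neg (by omega)]
    ring
  lift m to ℕ using hm
  rw [← Nat.cast_succ]
  rcases m with _ | m
  · rw [Nat.cast_zero, zero_sub, binom_of_neg (b := -1) (by norm_num), binom_natCast_zero,
      binom_natCast_zero]
    push_cast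
    ring
  · have pascal : ((n + 1).choose (m + 1) : ℤ) = n.choose m + n.choose (m + 1) := by
      exact_mod_cast Nat.choose_succ_succ' n m
    have absorb : ((n : ℤ) + 1) * n.choose m = (n + 1).choose (m + 1) * (m + 1) := by
      exact_mod_cast Nat.add_one_mul_choose_eq n m
    rw [show ((m + 1 : ℕ) : ℤ) - 1 = m by push_cast; ring, binom_natCast, binom_natCast,
      binom_natCast]
    push_cast
    linear_combination (-(n + 1 : ℤ)) * pascal - 2 * absorb

section Paths

variable {n : ℕ}

lemma pathHeight_snoc_of_le (p : Fin n → Bool) (b : Bool) {i : ℕ} (hi : i ≤ n) :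
    pathHeight (Fin.snoc p b : Fin (n + 1) → Bool) i = pathHeight p i := by
  simp only [pathHeight, sum_filter, Fin.sum_univ_castSucc, Fin.snoc_castSucc, Fin.val_castSucc,
    Fin.val_last, if_neg (not_lt.2 hi), add_zero]

lemma pathHeight_snoc_succ (p : Fin n → Bool) (b : Bool) :
    pathHeight (Fin.snoc p b : Fin (n + 1) → Bool) (n + 1) =
      pathHeight p n + if b then 1 else -1 := by
  simp [pathHeight, sum_filter, Fin.sum_univ_castSucc, Fin.snoc_castSucc, Fin.val_last]

lemma isGDPath_snoc (h : ℤ) (p : Fin n → Bool) (b : Bool) :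
    IsGDPath h (Fin.snoc p b : Fin (n + 1) → Bool) ↔
      0 ≤ h ∧ IsGDPath (h - if b then 1 else -1) p := by
  simp only [IsGDPath, pathHeight_snoc_succ, eq_sub_iff_add_eq]
  constructor
  · rintro ⟨hend, hnonneg⟩
    refine ⟨hend ▸ pathHeight_snoc_succ p b ▸ hnonneg (n + 1) le_rfl, hend, fun i hi => ?_⟩
    simpa only [pathHeight_snoc_of_le p b hi] using hnonneg i (by omega)
  · rintro ⟨hh, hend, hnonneg⟩
    refine ⟨hend, fun i hi => ?_⟩
    rcases Nat.le_succ_iff.1 hi with hi | rfl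
    · simpa only [pathHeight_snoc_of_le p b hi] using hnonneg i hi
    · rwa [pathHeight_snoc_succ, hend]

lemma downSteps_snoc (k : ℤ) (p : Fin n → Bool) (b : Bool) :
    downSteps k (Fin.snoc p b : Fin (n + 1) → Bool) =
      downSteps k p + if b = false ∧ pathHeight p n = k then 1 else 0 := by
  simp only [downSteps, card_filter, Fin.sum_univ_castSucc, Fin.snoc_castSucc, Fin.snoc_last,
    Fin.val_castSucc, Fin.val_last, pathHeight_snoc_of_le p b le_rfl,
    fun j : Fin n => pathHeight_snoc_of_le p b j.isLt.le]

lemma gdPaths_eq_empty_of_neg {h : ℤ} (hh : h < 0) : gdPaths n h = ∅ :=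
  filter_false_of_mem fun _ _ hp => by linarith [hp.1 ▸ hp.2 n le_rfl]

lemma card_gdPaths_zero (h : ℤ) : #(gdPaths 0 h) = if h = 0 then 1 else 0 := by
  have hheight (p : Fin 0 → Bool) (i : ℕ) : pathHeight p i = 0 := by simp [pathHeight]
  split_ifs with h0
  · rw [gdPaths, filter_true_of_mem fun p _ =>
      ⟨(hheight p 0).trans h0.symm, fun i _ => (hheight p i).ge⟩]
    rfl
  · rw [gdPaths, filter_false_of_mem fun p _ hp => h0 (hp.1.symm.trans (hheight p 0)), card_empty]

lemma sum_gdPaths_succ {M : Type*} [AddCommMonoid M] {h : ℤ} (hh : 0 ≤ h)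
    (f : (Fin (n + 1) → Bool) → M) :
    ∑ q ∈ gdPaths (n + 1) h, f q =
      ∑ p ∈ gdPaths n (h - 1), f (Fin.snoc p true) +
        ∑ p ∈ gdPaths n (h + 1), f (Fin.snoc p false) := by
  rw [gdPaths, sum_filter, ← (Fin.snocEquiv fun _ => Bool).sum_comp, Fintype.sum_prod_type,
    Fintype.sum_bool, gdPaths, gdPaths, sum_filter, sum_filter]
  simp [Fin.snocEquiv, isGDPath_snoc, hh]

end Paths

noncomputable def totalDownSteps (n : ℕ) (h k : ℤ) : ℕ :=
  ∑ p ∈ gdPaths n h, downSteps k p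

lemma card_gdPaths_succ {n : ℕ} {h : ℤ} (hh : 0 ≤ h) :
    #(gdPaths (n + 1) h) = #(gdPaths n (h - 1)) + #(gdPaths n (h + 1)) := by
  simpa only [card_eq_sum_ones] using sum_gdPaths_succ hh fun _ => 1

lemma totalDownSteps_succ {n : ℕ} {h : ℤ} (k : ℤ) (hh : 0 ≤ h) :
    totalDownSteps (n + 1) h k = totalDownSteps n (h - 1) k + totalDownSteps n (h + 1) k +
      if h + 1 = k then #(gdPaths n (h + 1)) else 0 := by
  have hlast : ∀ p ∈ gdPaths n (h + 1),
      downSteps k (Fin.snoc p false) = downSteps k p + if h + 1 = k then 1 else 0 :=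
    fun p hp => by simp [downSteps_snoc, (mem_filter.1 hp).2.1]
  rw [totalDownSteps, sum_gdPaths_succ hh, sum_congr rfl hlast, sum_add_distrib, sum_ite_irrel]
  simp [downSteps_snoc, totalDownSteps, add_assoc]

/- Allowing `a = -1`, where there are no paths, lets the induction step use the statement at
`a - 1`. -/
theorem card_gdPaths_eq_binom_sub (n : ℕ) {a : ℤ} (ha : -1 ≤ a) (hpar : ((n : ℤ) - a) % 2 = 0) :
    (#(gdPaths n a) : ℤ) = binom n ((n - a) / 2) - binom n ((n - a) / 2 - 1) := by
  induction n generalizing a with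
  | zero =>
    rw [card_gdPaths_zero, Nat.cast_zero, zero_sub]
    split_ifs with h0
    · subst h0
      norm_num [binom, binom_of_neg (b := -1)]
    · rw [binom_of_neg (by omega), binom_of_neg (by omega), Nat.cast_zero, sub_zero]
  | succ n ih =>
    obtain rfl | ha := ha.eq_or_lt
    · rw [gdPaths_eq_empty_of_neg (by norm_num), card_empty, Nat.cast_zero, eq_comm, sub_eq_zero,
        ← binom_natCast_symm]
      congr 1
      omega
    obtain ⟨m, hm⟩ : ∃ m, (n : ℤ) + 1 - a = 2 * m := ⟨((n : ℤ) + 1 - a) / 2, by omega⟩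
    rw [card_gdPaths_succ (by omega), Nat.cast_add, ih (by omega) (by omega),
      ih (by omega) (by omega), Nat.cast_succ, binom_natCast_succ, binom_natCast_succ,
      show ((n : ℤ) + 1 - a) / 2 = m by omega, show ((n : ℤ) - (a - 1)) / 2 = m by omega,
      show ((n : ℤ) - (a + 1)) / 2 = m - 1 by omega]
    ring

theorem totalDownSteps_eq_binom_sub (n : ℕ) {h k : ℤ} (hh : -1 ≤ h) (hk : 0 ≤ k)
    (hpar : ((n : ℤ) - h) % 2 = 0) :
    (totalDownSteps n h k : ℤ) =
      binom n ((n - h) / 2 - max 1 (k - h)) - binom n ((n - h) / 2 - k - 1) := by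
  induction n generalizing h with
  | zero =>
    rw [binom_of_neg (by omega), binom_of_neg (by omega), sub_zero, Nat.cast_eq_zero]
    exact sum_eq_zero fun p _ => by simp [downSteps]
  | succ n ih =>
    obtain rfl | hh := hh.eq_or_lt
    · rw [totalDownSteps, gdPaths_eq_empty_of_neg (by norm_num), sum_empty, Nat.cast_zero,
        eq_comm, sub_eq_zero]
      congr 1
      omega
    obtain ⟨m, hm⟩ : ∃ m, (n : ℤ) + 1 - h = 2 * m := ⟨((n : ℤ) + 1 - h) / 2, by omega⟩
    rw [totalDownSteps_succ k (by omega), Nat.cast_add, Nat.cast_add, ih (by omega) (by omega),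
      ih (by omega) (by omega), Nat.cast_succ, binom_natCast_succ, binom_natCast_succ,
      show ((n : ℤ) + 1 - h) / 2 = m by omega, show ((n : ℤ) - (h - 1)) / 2 = m by omega,
      show ((n : ℤ) - (h + 1)) / 2 = m - 1 by omega]
    rcases lt_trichotomy k (h + 1) with hkh | rfl | hkh
    · rw [if_neg hkh.ne', max_eq_left (by omega), max_eq_left (by omega), max_eq_left (by omega)]
      ring_nf
    · rw [if_pos rfl, card_gdPaths_eq_binom_sub n (by omega) (by omega),
        show ((n : ℤ) - (h + 1)) / 2 = m - 1 by omega, max_eq_right (by omega),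
        max_eq_left (by omega), max_eq_left (by omega)]
      ring_nf
    · rw [if_neg hkh.ne, max_eq_right (by omega), max_eq_right (by omega), max_eq_right (by omega)]
      ring_nf

/-- For k > h ≥ 0, (n+1) times the total number of k-down steps over all generalized Dyck
paths from (0,0) to (n,h) equals Σ_{j=k−1−h}^{k−1} (2j+h+3)·C(n+1, (n−2j−h−2)/2). -/
theorem stmt12 (n h k : ℕ) (hhk : h < k) (hmod : n % 2 = h % 2) :
    ((n : ℤ) + 1) * (∑ p ∈ gdPaths n (h : ℤ), downSteps (k : ℤ) p : ℕ) =
      ∑ j ∈ Finset.Icc (k - 1 - h) (k - 1),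
        (2 * (j : ℤ) + h + 3) * binom ((n : ℤ) + 1) (((n : ℤ) - 2 * j - h - 2) / 2) := by
  obtain ⟨m, hm⟩ : ∃ m, (n : ℤ) - h = 2 * m := ⟨((n : ℤ) - h) / 2, by omega⟩
  set g : ℕ → ℤ := fun j => binom n (m - j - 1)
  have hterm : ∀ j ∈ Icc (k - 1 - h) (k - 1),
      (2 * (j : ℤ) + h + 3) * binom ((n : ℤ) + 1) (((n : ℤ) - 2 * j - h - 2) / 2) =
        -(((n : ℤ) + 1) * (g (j + 1) - g j)) := fun j _ => by
    rw [show ((n : ℤ) - 2 * j - h - 2) / 2 = m - j - 1 by omega,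
      show 2 * (j : ℤ) + h + 3 = (n : ℤ) + 1 - 2 * (m - j - 1) by omega,
      ← natCast_succ_mul_binom_sub]
    push_cast [g]
    ring_nf
  rw [sum_congr rfl hterm, sum_neg_distrib, ← mul_sum,
    show Icc (k - 1 - h) (k - 1) = Ico (k - 1 - h) k by
      ext; simp only [mem_Icc, mem_Ico]; omega,
    sum_Ico_sub g (by omega)]
  change _ * (totalDownSteps n h k : ℤ) = _
  rw [totalDownSteps_eq_binom_sub n (by omega) (by omega) (by omega), max_eq_right (by omega)]
  push_cast [g, show ((n : ℤ) - h) / 2 = m by omega,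
    show ((k - 1 - h : ℕ) : ℤ) = k - 1 - h by omega]
  ring_nf
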